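/- Let s ∈ {0,1}^N be a sampling pattern with m = ‖s‖₀ ones, 0 < m < N, on a connected weighted graph. Then the redness satisfies the two-sided bound: m(1 − m/N)² / (Σ_{ℓ=2}^N μ_ℓ ŝ(ℓ)²) ≤ R_s ≤ m(μ₂ + μ_N)²(1 − m/N)² / (4 μ₂ μ_N Σ_{ℓ=2}^N μ_ℓ ŝ(ℓ)²), where ŝ = Uᵀs and R_s = (1/m) Σ_{ℓ=2}^N ŝ(ℓ)²/μ_ℓ. -/
import Mathlib

open Finset Matrix

set_option maxHeartbeats 1000000 in
/-- Redness inequality (Lemma): for a binary sampling pattern `s` with `m` ones,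
`m(1-m/N)² / (∑_{ℓ≥2} μ_ℓ ŝ(ℓ)²) ≤ R_s ≤ m(μ₂+μ_N)²(1-m/N)² / (4 μ₂ μ_N ∑_{ℓ≥2} μ_ℓ ŝ(ℓ)²)`,
where `R_s = (1/m) ∑_{ℓ≥2} ŝ(ℓ)²/μ_ℓ` and `ŝ = Uᵀ s`. -/
theorem stmt_3 {N : ℕ} (hN : 2 ≤ N)
    (W : Matrix (Fin N) (Fin N) ℝ)
    (hWsymm : W.IsSymm)
    (hWnonneg : ∀ u v, 0 ≤ W u v)
    (hWdiag : ∀ u, W u u = 0)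
    (L : Matrix (Fin N) (Fin N) ℝ)
    (hL : L = Matrix.diagonal (fun u => ∑ v, W u v) - W)
    (μ : Fin N → ℝ) (U : Matrix (Fin N) (Fin N) ℝ)
    (hU : Uᵀ * U = 1)
    (hμmono : Monotone μ)
    (hμ0 : μ (⟨0, by omega⟩ : Fin N) = 0)
    (hμ2 : 0 < μ (⟨1, by omega⟩ : Fin N))
    (hU0 : ∀ i, U i (⟨0, by omega⟩ : Fin N) = 1 / Real.sqrt N)
    (heig : ∀ ℓ, L.mulVec (fun i => U i ℓ) = μ ℓ • (fun i => U i ℓ))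
    (S : Finset (Fin N)) (s : Fin N → ℝ)
    (hs : ∀ v, s v = if v ∈ S then 1 else 0)
    (m : ℕ) (hm : m = S.card) (hm0 : 0 < m) (hmN : m < N) :
    (m : ℝ) * (1 - (m : ℝ) / N) ^ 2 /
        (∑ ℓ ∈ Finset.univ.erase (⟨0, by omega⟩ : Fin N), μ ℓ * ((Uᵀ.mulVec s) ℓ) ^ 2) ≤
      (1 / (m : ℝ)) * ∑ ℓ ∈ Finset.univ.erase (⟨0, by omega⟩ : Fin N), ((Uᵀ.mulVec s) ℓ) ^ 2 / μ ℓ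
    ∧
    (1 / (m : ℝ)) * ∑ ℓ ∈ Finset.univ.erase (⟨0, by omega⟩ : Fin N), ((Uᵀ.mulVec s) ℓ) ^ 2 / μ ℓ ≤
      (m : ℝ) * (μ (⟨1, by omega⟩ : Fin N) + μ (⟨N - 1, by omega⟩ : Fin N)) ^ 2 *
          (1 - (m : ℝ) / N) ^ 2 /
        (4 * μ (⟨1, by omega⟩ : Fin N) * μ (⟨N - 1, by omega⟩ : Fin N) *
          ∑ ℓ ∈ Finset.univ.erase (⟨0, by omega⟩ : Fin N), μ ℓ * ((Uᵀ.mulVec s) ℓ) ^ 2) := by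
  have hNpos : (0:ℝ) < N := by positivity
  set ℓ0 : Fin N := ⟨0, by omega⟩ with hℓ0
  set ℓ1 : Fin N := ⟨1, by omega⟩ with hℓ1
  set ℓN : Fin N := ⟨N - 1, by omega⟩ with hℓN
  set x : Fin N → ℝ := Uᵀ.mulVec s with hx
  set E : Finset (Fin N) := Finset.univ.erase ℓ0 with hE
  set α := μ ℓ1 with hα
  set β := μ ℓN with hβ
  have h1N : ℓ1 ≤ ℓN := by
    rw [hℓ1, hℓN, Fin.le_def]; simp only [Fin.val_mk]; omega
  have hβpos : 0 < β := lt_of_lt_of_le hμ2 (hμmono h1N)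
  -- bounds on μ on E
  have hμlb : ∀ ℓ ∈ E, α ≤ μ ℓ := by
    intro ℓ hℓ
    have hne : ℓ ≠ ℓ0 := (Finset.mem_erase.mp hℓ).1
    have : 1 ≤ ℓ.val := by
      rcases Nat.eq_zero_or_pos ℓ.val with h | h
      · exact absurd (Fin.ext (by rw [hℓ0]; simp [h]) : ℓ = ℓ0) hne
      · exact h
    exact hμmono (by rw [hℓ1, Fin.le_def]; simpa using this)
  have hμub : ∀ ℓ ∈ E, μ ℓ ≤ β := by
    intro ℓ _
    refine hμmono ?_
    rw [hℓN, Fin.le_def]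
    simp only [Fin.val_mk]
    omega
  have hμpos : ∀ ℓ ∈ E, 0 < μ ℓ := fun ℓ hℓ => lt_of_lt_of_le hμ2 (hμlb ℓ hℓ)
  -- sum of s = m, sum of s² = m
  have hsum : ∑ v, s v = m := by
    simp only [hs]
    rw [Finset.sum_ite_mem, Finset.univ_inter, Finset.sum_const, hm]
    simp
  have hsumsq : ∑ v, (s v) ^ 2 = m := by
    have : ∀ v, (s v)^2 = s v := by
      intro v; rw [hs]; split <;> norm_num
    rw [Finset.sum_congr rfl (fun v _ => this v), hsum]
  -- ‖x‖² = m
  have hxnorm : ∑ ℓ, (x ℓ) ^ 2 = m := by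
    have h1 : ∑ ℓ, (x ℓ)^2 = x ⬝ᵥ x := by
      simp [dotProduct, pow_two]
    rw [h1, hx, Matrix.dotProduct_mulVec, Matrix.vecMul_transpose,
      Matrix.mulVec_mulVec, mul_eq_one_comm.mp hU, Matrix.one_mulVec]
    simpa [dotProduct, pow_two] using hsumsq
  -- x ℓ0 = m / √N
  have hsqrtN : Real.sqrt N > 0 := Real.sqrt_pos.mpr hNpos
  have hx0 : x ℓ0 = m / Real.sqrt N := by
    rw [hx]
    simp only [Matrix.mulVec, dotProduct, Matrix.transpose_apply]
    rw [Finset.sum_congr rfl (fun i _ => by rw [hU0 i])]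
    rw [← Finset.mul_sum, hsum]
    ring
  have hx0sq : (x ℓ0) ^ 2 = (m:ℝ)^2 / N := by
    rw [hx0, div_pow, Real.sq_sqrt hNpos.le]
  -- A := ∑_E x² = m (1 - m/N)
  set A := ∑ ℓ ∈ E, (x ℓ)^2 with hA
  have hAval : A = (m:ℝ) * (1 - (m:ℝ)/N) := by
    have : A = (∑ ℓ, (x ℓ)^2) - (x ℓ0)^2 := by
      rw [hA, hE, Finset.sum_erase_eq_sub (Finset.mem_univ _)]
    rw [this, hxnorm, hx0sq]
    field_simp
  have hApos : 0 < A := by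
    rw [hAval]
    have h1 : (m:ℝ) < N := by exact_mod_cast hmN
    have h2 : (0:ℝ) < m := by exact_mod_cast hm0
    have : (m:ℝ)/N < 1 := (div_lt_one hNpos).mpr h1
    nlinarith
  set B := ∑ ℓ ∈ E, μ ℓ * (x ℓ)^2 with hB
  set C := ∑ ℓ ∈ E, (x ℓ)^2 / μ ℓ with hC
  have hBnonneg : 0 ≤ B := Finset.sum_nonneg fun ℓ hℓ =>
    mul_nonneg (hμpos ℓ hℓ).le (sq_nonneg _)
  have hCnonneg : 0 ≤ C := Finset.sum_nonneg fun ℓ hℓ =>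
    div_nonneg (by positivity) (hμpos ℓ hℓ).le
  have hBpos : 0 < B := by
    rcases hBnonneg.lt_or_eq with h | h
    · exact h
    · exfalso
      have hall : ∀ ℓ ∈ E, μ ℓ * (x ℓ)^2 = 0 := by
        intro ℓ hℓ
        have := (Finset.sum_eq_zero_iff_of_nonneg
          (fun ℓ hℓ => mul_nonneg (hμpos ℓ hℓ).le (sq_nonneg _))).mp h.symm
        exact this ℓ hℓ
      have : A = 0 := by
        rw [hA]
        apply Finset.sum_eq_zero
        intro ℓ hℓ
        have := hall ℓ hℓ
        have hμℓ := (hμpos ℓ hℓ).ne'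
        exact (mul_eq_zero.mp this).resolve_left hμℓ
      exact hApos.ne' this
  -- Cauchy-Schwarz : A^2 ≤ B * C
  have hCS : A ^ 2 ≤ B * C := by
    have := Finset.sum_mul_sq_le_sq_mul_sq E
      (fun ℓ => Real.sqrt (μ ℓ * (x ℓ)^2)) (fun ℓ => Real.sqrt ((x ℓ)^2 / μ ℓ))
    have e1 : ∑ ℓ ∈ E, Real.sqrt (μ ℓ * (x ℓ)^2) * Real.sqrt ((x ℓ)^2 / μ ℓ) = A := by
      rw [hA]
      apply Finset.sum_congr rfl
      intro ℓ hℓ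
      have hμℓ := hμpos ℓ hℓ
      rw [← Real.sqrt_mul (mul_nonneg hμℓ.le (sq_nonneg _))]
      rw [show μ ℓ * (x ℓ)^2 * ((x ℓ)^2 / μ ℓ) = ((x ℓ)^2)^2 by field_simp]
      exact Real.sqrt_sq (by positivity)
    have e2 : ∑ ℓ ∈ E, Real.sqrt (μ ℓ * (x ℓ)^2) ^ 2 = B := by
      rw [hB]
      exact Finset.sum_congr rfl fun ℓ hℓ =>
        Real.sq_sqrt (mul_nonneg (hμpos ℓ hℓ).le (sq_nonneg _))
    have e3 : ∑ ℓ ∈ E, Real.sqrt ((x ℓ)^2 / μ ℓ) ^ 2 = C := by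
      rw [hC]
      exact Finset.sum_congr rfl fun ℓ hℓ =>
        Real.sq_sqrt (div_nonneg (by positivity) (hμpos ℓ hℓ).le)
    rw [e1, e2, e3] at this
    exact this
  -- Kantorovich : B + αβ C ≤ (α+β) A, hence 4αβ B C ≤ (α+β)² A²
  have hKant1 : B + α * β * C ≤ (α + β) * A := by
    rw [hB, hC, hA, Finset.mul_sum, Finset.mul_sum, ← Finset.sum_add_distrib]
    apply Finset.sum_le_sum
    intro ℓ hℓ
    have h1 := hμlb ℓ hℓ
    have h2 := hμub ℓ hℓ
    have h3 := hμpos ℓ hℓ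
    have key : (μ ℓ - α) * (β - μ ℓ) * ((x ℓ)^2 / μ ℓ) ≥ 0 := by
      apply mul_nonneg (mul_nonneg (by linarith) (by linarith))
      positivity
    have hx2 : (x ℓ)^2 / μ ℓ * μ ℓ = (x ℓ)^2 := div_mul_cancel₀ _ h3.ne'
    nlinarith [key, h3]
  have hKant : 4 * α * β * (B * C) ≤ (α + β)^2 * A^2 := by
    have h4 : 4 * (B * (α * β * C)) ≤ (B + α * β * C)^2 := by nlinarith [sq_nonneg (B - α*β*C)]
    have h5 : (B + α * β * C)^2 ≤ ((α + β) * A)^2 := by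
      apply sq_le_sq'
      · nlinarith [mul_nonneg (mul_nonneg hμ2.le hβpos.le) hCnonneg]
      · exact hKant1
    nlinarith
  have hmpos : (0:ℝ) < m := by exact_mod_cast hm0
  have hAsq : (m:ℝ) * (1 - (m:ℝ)/N)^2 = A^2 / m := by
    rw [hAval]; field_simp
  have hm' : (m:ℝ) ≠ 0 := hmpos.ne'
  have hα0 : α ≠ 0 := hμ2.ne'
  have hβ0 : β ≠ 0 := hβpos.ne'
  have hB0 : B ≠ 0 := hBpos.ne'
  have hN0 : (N:ℝ) ≠ 0 := hNpos.ne'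
  have hden : (0:ℝ) < 4 * α * β * B :=
    mul_pos (mul_pos (mul_pos (by norm_num) hμ2) hβpos) hBpos
  constructor
  · -- lower bound
    rw [hAsq, div_div, div_le_iff₀ (mul_pos hmpos hBpos)]
    have : 1 / (m:ℝ) * C * ((m:ℝ) * B) = B * C * ((1/(m:ℝ)) * m) := by ring
    rw [this, one_div, inv_mul_cancel₀ hm', mul_one]
    exact hCS
  · -- upper bound
    have hrhs : (m:ℝ) * (α + β)^2 * (1 - (m:ℝ)/N)^2 / (4 * α * β * B)
        = (α + β)^2 * A^2 / ((m:ℝ) * (4 * α * β * B)) := by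
      rw [hAval]
      field_simp
    rw [hrhs, le_div_iff₀ (mul_pos hmpos hden)]
    have : 1 / (m:ℝ) * C * ((m:ℝ) * (4*α*β*B)) = 4*α*β*(B*C) * ((1/(m:ℝ)) * m) := by ring
    rw [this, one_div, inv_mul_cancel₀ hm', mul_one]
    exact hKant
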